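/- Let X : ℝᵒᵖ → Set be a functor. Assume that for each s ∈ ℝ the natural map colim_{t>s} X_t → X_s is bijective and the natural map X_s → lim_{r<s} X_r is surjective. Then for all real numbers s ≤ t the transition map ρ_{s,t} : X_t → X_s is surjective. -/

import Mathlib

open CategoryTheory CategoryTheory.Limits Opposite

/-- The restriction of a functor `X : ℝᵒᵖ ⥤ C` to the (opposite of the) ordered set
`{t : ℝ // s < t}`. -/
def restrictGT {C : Type*} [Category C] (X : ℝᵒᵖ ⥤ C) (s : ℝ) :
    ({t : ℝ // s < t})ᵒᵖ ⥤ C :=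
  (Monotone.functor (f := fun t : {t : ℝ // s < t} => (t : ℝ)) fun _ _ h => h).op ⋙ X

/-- The canonical cocone on `restrictGT X s` with apex `X s`, whose legs are the
transition maps `X t → X s` for `t > s`. -/
def coconeGT {C : Type*} [Category C] (X : ℝᵒᵖ ⥤ C) (s : ℝ) : Cocone (restrictGT X s) where
  pt := X.obj (op s)
  ι :=
    { app := fun t => X.map (homOfLE t.unop.2.le).op
      naturality := fun a b f => by
        dsimp [restrictGT]
        rw [Category.comp_id]
        exact (X.map_comp _ _).symm }

/-- The restriction of a functor `X : ℝᵒᵖ ⥤ C` to the (opposite of the) ordered set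
`{r : ℝ // r < s}`. -/
def restrictLT {C : Type*} [Category C] (X : ℝᵒᵖ ⥤ C) (s : ℝ) :
    ({r : ℝ // r < s})ᵒᵖ ⥤ C :=
  (Monotone.functor (f := fun r : {r : ℝ // r < s} => (r : ℝ)) fun _ _ h => h).op ⋙ X

/-- The canonical cone on `restrictLT X s` with apex `X s`, whose legs are the
transition maps `X s → X r` for `r < s`. -/
def coneLT {C : Type*} [Category C] (X : ℝᵒᵖ ⥤ C) (s : ℝ) : Cone (restrictLT X s) where
  pt := X.obj (op s)
  π :=
    { app := fun r => X.map (homOfLE r.unop.2.le).op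
      naturality := fun a b f => by
        dsimp [restrictLT]
        rw [Category.id_comp]
        exact X.map_comp _ _ }

lemma map_map_aux (X : ℝᵒᵖ ⥤ Type) {a b c : ℝ} (h1 : a ≤ b) (h2 : b ≤ c) (y : X.obj (op c)) :
    X.map (homOfLE h1).op (X.map (homOfLE h2).op y) = X.map (homOfLE (h1.trans h2)).op y := by
  rw [← FunctorToTypes.map_comp_apply, ← op_comp, homOfLE_comp]

lemma map_id_aux (X : ℝᵒᵖ ⥤ Type) {a : ℝ} (h : a ≤ a) (y : X.obj (op a)) :
    X.map (homOfLE h).op y = y := by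
  have : (homOfLE h).op = 𝟙 (op a) := rfl
  rw [this, FunctorToTypes.map_id_apply]

lemma colim_surj (X : ℝᵒᵖ ⥤ Type)
    (hcolim : ∀ s : ℝ, Function.Bijective (colimit.desc (restrictGT X s) (coconeGT X s)))
    (u : ℝ) (x : X.obj (op u)) :
    ∃ (v : ℝ) (hv : u < v) (y : X.obj (op v)), X.map (homOfLE hv.le).op y = x := by
  obtain ⟨c, hc⟩ := (hcolim u).2 x
  obtain ⟨j, y, hy⟩ := Types.jointly_surjective' c
  refine ⟨j.unop, j.unop.2, y, ?_⟩
  have h1 := congrArg (colimit.desc (restrictGT X u) (coconeGT X u)) hy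
  rw [hc] at h1
  have h2 := colimit.ι_desc_apply (coconeGT X u) j y
  rw [← h1, h2]
  rfl

lemma lim_surj (X : ℝᵒᵖ ⥤ Type)
    (hlim : ∀ s : ℝ, Function.Surjective (limit.lift (restrictLT X s) (coneLT X s)))
    (u : ℝ) (z : ∀ r : {r : ℝ // r < u}, X.obj (op (r : ℝ)))
    (hz : ∀ (r r' : {r : ℝ // r < u}) (h : (r : ℝ) ≤ (r' : ℝ)),
      X.map (homOfLE h).op (z r') = z r) :
    ∃ y : X.obj (op u), ∀ r : {r : ℝ // r < u}, X.map (homOfLE r.2.le).op y = z r := by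
  let cn : Cone (restrictLT X u) :=
    { pt := PUnit
      π := { app := fun r => TypeCat.ofHom (fun _ => z r.unop)
             naturality := fun a b f => by
               ext w
               exact (hz b.unop a.unop (leOfHom f.unop)).symm } }
  obtain ⟨y, hy⟩ := hlim u (limit.lift (restrictLT X u) cn PUnit.unit)
  refine ⟨y, fun r => ?_⟩
  have h1 := limit.lift_π_apply (coneLT X u) (op r) y
  have h2 := limit.lift_π_apply cn (op r) PUnit.unit
  rw [hy, h2] at h1
  exact h1.symm

/-- If for every `s ∈ ℝ` the canonical map `colim_{t>s} X_t → X_s` is bijective and the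
canonical map `X_s → lim_{r<s} X_r` is surjective, then all transition maps `X_t → X_s`
(for `s ≤ t`) are surjective. -/
theorem transition_surjective_sets (X : ℝᵒᵖ ⥤ Type)
    (hcolim : ∀ s : ℝ,
      Function.Bijective (colimit.desc (restrictGT X s) (coconeGT X s)))
    (hlim : ∀ s : ℝ,
      Function.Surjective (limit.lift (restrictLT X s) (coneLT X s))) :
    ∀ (s t : ℝ) (h : s ≤ t), Function.Surjective (X.map (homOfLE h).op) := by
  intro s t hst x
  -- the poset of lifts of `x` to levels in `[s, t]`
  let T := {p : Σ u : ℝ, X.obj (op u) //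
    ∃ h1 : s ≤ p.1, p.1 ≤ t ∧ X.map (homOfLE h1).op p.2 = x}
  letI : Preorder T :=
    { le := fun p q => ∃ h : p.1.1 ≤ q.1.1, X.map (homOfLE h).op q.1.2 = p.1.2
      le_refl := fun p => ⟨le_rfl, map_id_aux X le_rfl p.1.2⟩
      le_trans := fun p q r ⟨h1, e1⟩ ⟨h2, e2⟩ =>
        ⟨h1.trans h2, by rw [← map_map_aux X h1 h2, e2, e1]⟩ }
  have hTne : Nonempty T := ⟨⟨⟨s, x⟩, le_rfl, hst, map_id_aux X le_rfl x⟩⟩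
  -- every chain is bounded above
  have hbdd : ∀ c : Set T, IsChain (· ≤ ·) c → BddAbove c := by
    intro c hc
    rcases c.eq_empty_or_nonempty with rfl | ⟨p₀, hp₀⟩
    · exact ⟨hTne.some, fun p hp => hp.elim⟩
    -- well-definedness of restrictions along the chain
    have key : ∀ p ∈ c, ∀ q ∈ c, ∀ (r : ℝ) (h1 : r ≤ p.1.1) (h2 : r ≤ q.1.1),
        X.map (homOfLE h1).op p.1.2 = X.map (homOfLE h2).op q.1.2 := by
      intro p hp q hq r h1 h2
      rcases eq_or_ne p q with rfl | hne
      · rfl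
      rcases hc hp hq hne with ⟨h, e⟩ | ⟨h, e⟩
      · rw [← e, map_map_aux X h1 h]
      · rw [← e, map_map_aux X h2 h]
    set u : ℝ := sSup ((fun p : T => p.1.1) '' c) with hu
    have hbddim : BddAbove ((fun p : T => p.1.1) '' c) :=
      ⟨t, fun v ⟨p, _, hpv⟩ => hpv ▸ p.2.2.1⟩
    have hne : ((fun p : T => p.1.1) '' c).Nonempty := ⟨p₀.1.1, p₀, hp₀, rfl⟩
    have hle_u : ∀ p ∈ c, p.1.1 ≤ u := fun p hp => le_csSup hbddim ⟨p, hp, rfl⟩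
    have hu_t : u ≤ t := csSup_le hne (fun v ⟨p, _, hpv⟩ => hpv ▸ p.2.2.1)
    have hs_u : s ≤ u := p₀.2.1.trans (hle_u p₀ hp₀)
    by_cases hatt : ∃ p ∈ c, p.1.1 = u
    · obtain ⟨p, hp, hpu⟩ := hatt
      refine ⟨p, fun q hq => ?_⟩
      have hqp : q.1.1 ≤ p.1.1 := hpu ▸ hle_u q hq
      refine ⟨hqp, ?_⟩
      rw [key p hp q hq q.1.1 hqp le_rfl, map_id_aux X le_rfl q.1.2]
    · push_neg at hatt
      have hlt : ∀ p ∈ c, p.1.1 < u := fun p hp => (hle_u p hp).lt_of_ne (hatt p hp)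
      have hs_u' : s < u := lt_of_le_of_lt p₀.2.1 (hlt p₀ hp₀)
      have hex : ∀ r : {r : ℝ // r < u}, ∃ p : T, p ∈ c ∧ (r : ℝ) ≤ p.1.1 := by
        intro r
        by_contra hcon
        push_neg at hcon
        have : u ≤ (r : ℝ) := csSup_le hne (fun v ⟨p, hp, hpv⟩ => hpv ▸ (hcon p hp).le)
        exact absurd (lt_of_lt_of_le r.2 this) (lt_irrefl _)
      choose P hP1 hP2 using hex
      obtain ⟨y, hy⟩ := lim_surj X hlim u
        (fun r => X.map (homOfLE (hP2 r)).op (P r).1.2)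
        (fun r r' h => by
          rw [map_map_aux X h (hP2 r')]
          exact key (P r') (hP1 r') (P r) (hP1 r) r (h.trans (hP2 r')) (hP2 r))
      have hyx : X.map (homOfLE hs_u).op y = x := by
        have := hy ⟨s, hs_u'⟩
        rw [this]
        obtain ⟨h1, _, hx1⟩ := (P ⟨s, hs_u'⟩).2
        exact hx1
      refine ⟨⟨⟨u, y⟩, hs_u, hu_t, hyx⟩, fun p hp => ⟨hle_u p hp, ?_⟩⟩
      have := hy ⟨p.1.1, hlt p hp⟩
      rw [this, key (P ⟨p.1.1, hlt p hp⟩) (hP1 ⟨p.1.1, hlt p hp⟩) p hp p.1.1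
        (hP2 ⟨p.1.1, hlt p hp⟩) le_rfl, map_id_aux X le_rfl]
  obtain ⟨m, hm⟩ := zorn_le hbdd
  -- the maximal element must sit at level `t`
  have hmt : m.1.1 = t := by
    by_contra hne
    have hmlt : m.1.1 < t := (m.2.2.1).lt_of_ne hne
    obtain ⟨v, hv, y', hy'⟩ := colim_surj X hcolim m.1.1 m.1.2
    set w := min v t with hw
    have hw1 : m.1.1 < w := lt_min hv hmlt
    have hw2 : w ≤ t := min_le_right v t
    have hsw : s ≤ w := m.2.1.trans hw1.le
    set y'' := X.map (homOfLE (min_le_left v t)).op y' with hy''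
    have hq1 : X.map (homOfLE hw1.le).op y'' = m.1.2 := by
      rw [hy'', map_map_aux X hw1.le (min_le_left v t)]
      have : (hw1.le.trans (min_le_left v t)) = hv.le := rfl
      rw [this, hy']
    have hqmem : ∃ h1 : s ≤ w, w ≤ t ∧ X.map (homOfLE h1).op y'' = x := by
      refine ⟨hsw, hw2, ?_⟩
      rw [hy'', map_map_aux X hsw (min_le_left v t)]
      have : X.map (homOfLE (hsw.trans (min_le_left v t))).op y'
          = X.map (homOfLE m.2.1).op (X.map (homOfLE hv.le).op y') := by
        rw [map_map_aux X m.2.1 hv.le]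
      rw [this, hy']
      exact m.2.2.2
    have hle : m ≤ (⟨⟨w, y''⟩, hqmem⟩ : T) := ⟨hw1.le, hq1⟩
    have := (hm hle).1
    exact absurd (lt_of_lt_of_le hw1 this) (lt_irrefl _)
  obtain ⟨⟨u, y⟩, hu1, hu2, hux⟩ := m
  dsimp at hmt
  subst hmt
  exact ⟨y, hux⟩
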